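/- If T is a tree with γ_m^∞(T) = 2γ(T), then every minimum dominating set of T is an independent set. -/

import Mathlib

open scoped Classical

namespace ED

variable {V : Type}

/-- `D` is a dominating set of `G`. -/
def IsDomSet (G : SimpleGraph V) (D : Set V) : Prop :=
  ∀ v, v ∉ D → ∃ u ∈ D, G.Adj u v

/-- The domination number. -/
noncomputable def domNum (G : SimpleGraph V) : ℕ :=
  sInf {n | ∃ D : Set V, IsDomSet G D ∧ D.ncard = n}

/-- The connected domination number. -/
noncomputable def connDomNum (G : SimpleGraph V) : ℕ :=
  sInf {n | ∃ D : Set V, IsDomSet G D ∧ (G.induce D).Connected ∧ D.ncard = n}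

/-- The weight of a part of a neo-colonization. -/
noncomputable def partWeight (G : SimpleGraph V) (S : Set V) : ℕ :=
  if G.IsClique S then 1 else 1 + connDomNum (G.induce S)

/-- `P` is a neo-colonization of `G`: a partition of the vertex set into parts
inducing connected subgraphs. -/
def IsNeoColonization (G : SimpleGraph V) (P : Finset (Set V)) : Prop :=
  (∀ S ∈ P, (G.induce S).Connected) ∧ (∀ v : V, ∃! S, S ∈ P ∧ v ∈ S)

/-- The total weight of a neo-colonization. -/
noncomputable def neoWeight (G : SimpleGraph V) (P : Finset (Set V)) : ℕ :=
  ∑ S ∈ P, partWeight G S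

/-- The clique-connected cover number: minimum weight of a neo-colonization. -/
noncomputable def thetaC (G : SimpleGraph V) : ℕ :=
  sInf {w | ∃ P : Finset (Set V), IsNeoColonization G P ∧ neoWeight G P = w}

/-- `k` guards can defend `G` in the all-guards-move eternal domination game:
there is a nonempty family of dominating configurations of size `k`, closed under
responding to attacks, where every guard may move to an adjacent vertex and the
attacked vertex becomes occupied. -/
def CanDefendAllMove (G : SimpleGraph V) (k : ℕ) : Prop :=
  ∃ F : Set (Set V), F.Nonempty ∧ (∀ D ∈ F, IsDomSet G D ∧ D.ncard = k) ∧
    ∀ D ∈ F, ∀ r ∉ D, ∃ D' ∈ F, r ∈ D' ∧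
      ∃ f : V → V, Set.BijOn f D D' ∧ ∀ v ∈ D, f v = v ∨ G.Adj v (f v)

/-- The m-eternal domination number. -/
noncomputable def mEternalDomNum (G : SimpleGraph V) : ℕ :=
  sInf {k | CanDefendAllMove G k}

/-- `k` guards can defend `G` in the one-guard-moves eternal domination game. -/
def CanDefendOneMove (G : SimpleGraph V) (k : ℕ) : Prop :=
  ∃ F : Set (Set V), F.Nonempty ∧ (∀ D ∈ F, IsDomSet G D ∧ D.ncard = k) ∧
    ∀ D ∈ F, ∀ r ∉ D, ∃ v ∈ D, G.Adj v r ∧ insert r (D \ {v}) ∈ F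

/-- The eternal domination number. -/
noncomputable def eternalDomNum (G : SimpleGraph V) : ℕ :=
  sInf {k | CanDefendOneMove G k}

/-- The independence number. -/
noncomputable def indepNum (G : SimpleGraph V) : ℕ :=
  sSup {n | ∃ S : Set V, S.Pairwise (fun u v => ¬ G.Adj u v) ∧ S.ncard = n}

/-- A leaf: a vertex of degree one. -/
def IsLeaf (G : SimpleGraph V) (v : V) : Prop := (G.neighborSet v).ncard = 1

/-- A stem: a vertex of degree at least two adjacent to a leaf. -/
def IsStem (G : SimpleGraph V) (s : V) : Prop :=
  2 ≤ (G.neighborSet s).ncard ∧ ∃ v, G.Adj s v ∧ IsLeaf G v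

/-- A loner: an internal vertex adjacent to no leaf. -/
def IsLoner (G : SimpleGraph V) (v : V) : Prop :=
  ¬ IsLeaf G v ∧ ∀ u, G.Adj v u → ¬ IsLeaf G u

/-- A weak stem: a stem adjacent to exactly one leaf. -/
def IsWeakStem (G : SimpleGraph V) (s : V) : Prop :=
  IsStem G s ∧ {v | G.Adj s v ∧ IsLeaf G v}.ncard = 1

/-- An exposed stem: a stem with at most one internal (non-leaf) neighbor. -/
def IsExposedStem (G : SimpleGraph V) (s : V) : Prop :=
  IsStem G s ∧ {v | G.Adj s v ∧ ¬ IsLeaf G v}.ncard ≤ 1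

/-- `G` is a star: some center is adjacent to all other vertices and
every edge is incident to the center. -/
def IsStarGraph (G : SimpleGraph V) : Prop :=
  ∃ c, (∀ v, v ≠ c → G.Adj c v) ∧ ∀ u v, G.Adj u v → u = c ∨ v = c

end ED

/-! If a minimum dominating set `D` contains adjacent vertices `u` and `v`, then `2|D| - 1`
guards defend in the all-guards-move game, so `γ_m^∞ < 2γ`. Guards occupy all of `D`, and
every `w ∈ D \ {v}` has a backup guard outside `D` next to `w` (the backup of `u` may sit next
to `v` instead). Distinct backup spots exist by Hall's theorem. An attack on `r` is answered
through a vertex `w` whose backup could sit at `r`: a guard of `D` next to `r` steps onto it,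
and the backup of `w` shifts into the gap (via the edge `uv` when `w = u`), leaving `r` as the
new backup of `w`. -/

namespace ED

variable {V : Type} {G : SimpleGraph V}

section Domination

variable {D E : Set V}

lemma IsDomSet.mono (hD : IsDomSet G D) (hDE : D ⊆ E) : IsDomSet G E := by
  intro x hx
  obtain ⟨d, hd, hdx⟩ := hD x (fun h => hx (hDE h))
  exact ⟨d, hDE hd, hdx⟩

lemma domNum_le_ncard (hD : IsDomSet G D) : domNum G ≤ D.ncard :=
  Nat.sInf_le ⟨D, hD, rfl⟩

lemma IsDomSet.exists_adj_notMem [Finite V] (hD : IsDomSet G D) (hmin : D.ncard = domNum G)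
    {w x : V} (hw : w ∈ D) (hwx : G.Adj w x) : ∃ y, G.Adj w y ∧ y ∉ D := by
  by_contra! hclosed
  have hdom : IsDomSet G (D \ {w}) := by
    intro z hz
    by_cases hzw : z = w
    · subst hzw
      exact ⟨x, ⟨hclosed x hwx, hwx.ne'⟩, hwx.symm⟩
    · have hzD : z ∉ D := fun h => hz ⟨h, hzw⟩
      obtain ⟨d, hd, hdz⟩ := hD z hzD
      exact ⟨d, ⟨hd, by rintro rfl; exact hzD (hclosed z hdz)⟩, hdz⟩
  have := Set.ncard_sdiff_singleton_lt_of_mem hw (Set.toFinite D)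
  have := domNum_le_ncard hdom
  omega

end Domination

def IsGuardMove (G : SimpleGraph V) (C C' : Set V) : Prop :=
  ∃ f : V → V, Set.BijOn f C C' ∧ ∀ x ∈ C, f x = x ∨ G.Adj x (f x)

/-- The guards on `a`, `b`, `c` move one step along the path `c - b - a - r`
(or `c - a - r` when `a = b`), so that `r` becomes occupied and `c` is vacated. -/
lemma isGuardMove_shift {C : Set V} {a b c r : V} (ha : a ∈ C) (hb : b ∈ C) (hc : c ∈ C)
    (hc_ne_a : c ≠ a) (hc_ne_b : c ≠ b) (hr : r ∉ C) (har : G.Adj a r)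
    (hba : b = a ∨ G.Adj b a) (hcb : G.Adj c b) : IsGuardMove G C (insert r (C \ {c})) :=
  ⟨fun z => if z = a then r else if z = c then b else if z = b then a else z,
    ⟨fun z _ => by grind, fun x _ y _ _ => by grind, fun y _ => by grind⟩,
    fun z _ => by grind⟩

section Backup

variable (G) (D : Set V) (u v : V)

/-- `x` is an admissible spot for the backup guard of `w ∈ D`. -/
def IsBackup (w x : V) : Prop := x ∉ D ∧ (G.Adj w x ∨ w = u ∧ G.Adj v x)

def IsBackupAssignment (g : V → V) : Prop :=
  Set.InjOn g (D \ {v}) ∧ ∀ w ∈ D \ {v}, IsBackup G D u v w (g w)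

def guardConfig (g : V → V) : Set V := D ∪ g '' (D \ {v})

variable {G D u v} {g : V → V} {w r : V}

lemma IsBackupAssignment.disjoint (hg : IsBackupAssignment G D u v g) :
    Disjoint D (g '' (D \ {v})) := by
  rw [Set.disjoint_right]
  rintro _ ⟨x, hx, rfl⟩
  exact (hg.2 x hx).1

lemma IsBackupAssignment.ncard_guardConfig [Finite V] (hg : IsBackupAssignment G D u v g)
    (hv : v ∈ D) : (guardConfig D v g).ncard = D.ncard + (D.ncard - 1) := by
  rw [guardConfig, Set.ncard_union_eq hg.disjoint (Set.toFinite _) (Set.toFinite _),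
    hg.1.ncard_image, Set.ncard_sdiff_singleton_of_mem hv]

lemma IsBackupAssignment.guardConfig_update (hg : IsBackupAssignment G D u v g)
    (hw : w ∈ D \ {v}) :
    guardConfig D v (Function.update g w r) = insert r (guardConfig D v g \ {g w}) := by
  have hgw : g w ∉ D := (hg.2 w hw).1
  have hinj := hg.1
  ext y
  simp only [guardConfig, Set.mem_union, Set.mem_image, Set.mem_insert_iff, Set.mem_sdiff,
    Set.mem_singleton_iff, Function.update_apply]
  grind [Set.InjOn]

lemma IsBackupAssignment.update (hg : IsBackupAssignment G D u v g)
    (hr : r ∉ guardConfig D v g) (hwr : IsBackup G D u v w r) :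
    IsBackupAssignment G D u v (Function.update g w r) := by
  have hinj := hg.1
  simp only [guardConfig, Set.mem_union, Set.mem_image, not_or, not_exists, not_and] at hr
  constructor
  · intro x hx y hy
    simp only [Function.update_apply]
    grind [Set.InjOn]
  · intro x hx
    rw [Function.update_apply]
    split_ifs with hxw
    · exact hxw ▸ hwr
    · exact hg.2 x hx

lemma IsBackup.exists_adj {x : V} (hwx : IsBackup G D u v w x) (hw : w ∈ D) (hv : v ∈ D) :
    ∃ a ∈ D, (a = w ∨ w = u ∧ a = v) ∧ G.Adj a x := by
  obtain ⟨-, hwx | ⟨rfl, hvx⟩⟩ := hwx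
  · exact ⟨w, hw, Or.inl rfl, hwx⟩
  · exact ⟨v, hv, Or.inr ⟨rfl, rfl⟩, hvx⟩

lemma IsBackupAssignment.isGuardMove (hg : IsBackupAssignment G D u v g) (huv : G.Adj u v)
    (hv : v ∈ D) (hw : w ∈ D \ {v}) (hr : r ∉ guardConfig D v g)
    (hwr : IsBackup G D u v w r) :
    IsGuardMove G (guardConfig D v g) (guardConfig D v (Function.update g w r)) := by
  rw [hg.guardConfig_update hw]
  obtain ⟨a, haD, ha, har⟩ := hwr.exists_adj hw.1 hv
  obtain ⟨b, hbD, hb, hbg⟩ := (hg.2 w hw).exists_adj hw.1 hv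
  have hba : b = a ∨ G.Adj b a := by grind [huv.symm]
  have hgD : g w ∉ D := (hg.2 w hw).1
  exact isGuardMove_shift (Or.inl haD) (Or.inl hbD) (Or.inr ⟨w, hw, rfl⟩)
    (ne_of_mem_of_not_mem haD hgD).symm (ne_of_mem_of_not_mem hbD hgD).symm hr har hba hbg.symm

lemma exists_isBackup_of_notMem (hD : IsDomSet G D) (hu : u ∈ D) (huv : u ≠ v) (hr : r ∉ D) :
    ∃ w ∈ D \ {v}, IsBackup G D u v w r := by
  obtain ⟨d, hd, hdr⟩ := hD r hr
  by_cases hdv : d = v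
  · subst hdv
    exact ⟨u, ⟨hu, huv⟩, hr, Or.inr ⟨rfl, hdr⟩⟩
  · exact ⟨d, ⟨hd, hdv⟩, hr, Or.inl hdr⟩

/-- Hall's condition for backup assignments: if a set `S` of guards had fewer than `|S|`
backup spots, replacing `S` by these spots would give a smaller dominating set. -/
lemma ncard_le_ncard_setOf_isBackup [Finite V] (hconn : G.Connected) (hD : IsDomSet G D)
    (hmin : D.ncard = domNum G) (huv : G.Adj u v) (hv : v ∈ D) {S : Set V}
    (hS : S ⊆ D \ {v}) : S.ncard ≤ {x | ∃ w ∈ S, IsBackup G D u v w x}.ncard := by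
  have : Nontrivial V := ⟨⟨u, v, huv.ne⟩⟩
  set Z := {x | ∃ w ∈ S, IsBackup G D u v w x}
  have hdom : IsDomSet G ((D \ S) ∪ Z) := by
    intro z hz
    by_cases hzD : z ∈ D
    · have hzS : z ∈ S := by_contra fun h => hz (Or.inl ⟨hzD, h⟩)
      by_cases hzu : z = u
      · subst hzu
        exact ⟨v, Or.inl ⟨hv, fun h => (hS h).2 rfl⟩, huv.symm⟩
      · obtain ⟨y, hzy⟩ := hconn.preconnected.exists_adj_of_nontrivial z
        obtain ⟨x, hzx, hxD⟩ := hD.exists_adj_notMem hmin hzD hzy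
        exact ⟨x, Or.inr ⟨z, hzS, hxD, Or.inl hzx⟩, hzx.symm⟩
    · obtain ⟨d, hd, hdz⟩ := hD z hzD
      by_cases hdS : d ∈ S
      · exact absurd (Or.inr ⟨d, hdS, hzD, Or.inl hdz⟩) hz
      · exact ⟨d, Or.inl ⟨hd, hdS⟩, hdz⟩
  have hSD : S ⊆ D := hS.trans Set.sdiff_subset
  by_contra! hlt
  have := domNum_le_ncard hdom
  have := Set.ncard_union_le (D \ S) Z
  have := Set.ncard_sdiff hSD (Set.toFinite S)
  have := Set.ncard_le_ncard hSD
  omega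

lemma exists_isBackupAssignment [Fintype V] (hconn : G.Connected) (hD : IsDomSet G D)
    (hmin : D.ncard = domNum G) (huv : G.Adj u v) (hv : v ∈ D) :
    ∃ g, IsBackupAssignment G D u v g := by
  obtain ⟨f, hf_inj, hf⟩ := (Fintype.all_card_le_filter_rel_iff_exists_injective
      (fun (w : ↥(D \ {v})) x => IsBackup G D u v w x)).1 fun A => by
    have hA := ncard_le_ncard_setOf_isBackup hconn hD hmin huv hv
      (S := Subtype.val '' (A : Set ↥(D \ {v}))) (by rintro _ ⟨w, -, rfl⟩; exact w.2)
    rw [Set.ncard_image_of_injective _ Subtype.val_injective, Set.ncard_coe_finset] at hA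
    convert hA using 1
    rw [← Set.ncard_coe_finset]
    congr 1
    ext x
    simp
  refine ⟨fun x => if hx : x ∈ D \ {v} then f ⟨x, hx⟩ else x, ?_, ?_⟩
  · intro x hx y hy hxy
    simp only [dif_pos hx, dif_pos hy] at hxy
    exact congrArg Subtype.val (hf_inj hxy)
  · intro x hx
    simpa only [dif_pos hx] using hf ⟨x, hx⟩

theorem canDefendAllMove_of_adj [Fintype V] (hconn : G.Connected) (hD : IsDomSet G D)
    (hmin : D.ncard = domNum G) (hu : u ∈ D) (hv : v ∈ D) (huv : G.Adj u v) :
    CanDefendAllMove G (2 * D.ncard - 1) := by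
  obtain ⟨g₀, hg₀⟩ := exists_isBackupAssignment hconn hD hmin huv hv
  refine ⟨guardConfig D v '' {g | IsBackupAssignment G D u v g}, ⟨_, g₀, hg₀, rfl⟩,
    ?_, ?_⟩
  · rintro _ ⟨g, hg, rfl⟩
    refine ⟨hD.mono Set.subset_union_left, ?_⟩
    have := (Set.ncard_pos (Set.toFinite D)).2 ⟨u, hu⟩
    rw [hg.ncard_guardConfig hv]
    omega
  · rintro _ ⟨g, hg, rfl⟩ r hr
    obtain ⟨w, hw, hwr⟩ := exists_isBackup_of_notMem hD hu huv.ne fun h => hr (Or.inl h)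
    refine ⟨_, ⟨_, hg.update hr hwr, rfl⟩, ?_, hg.isGuardMove huv hv hw hr hwr⟩
    rw [hg.guardConfig_update hw]
    exact Set.mem_insert r _

theorem mEternalDomNum_lt_two_mul_domNum [Fintype V] (hconn : G.Connected) (hD : IsDomSet G D)
    (hmin : D.ncard = domNum G) (hu : u ∈ D) (hv : v ∈ D) (huv : G.Adj u v) :
    mEternalDomNum G < 2 * domNum G := by
  have := (Set.ncard_pos (Set.toFinite D)).2 ⟨u, hu⟩
  have : mEternalDomNum G ≤ 2 * D.ncard - 1 :=
    Nat.sInf_le (s := {k | CanDefendAllMove G k})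
      (canDefendAllMove_of_adj hconn hD hmin hu hv huv)
  omega

end Backup

end ED

open ED in
/-- If `T` is a tree with `γ_m^∞(T) = 2γ(T)`, then every minimum dominating set of `T`
is an independent set. -/
theorem stmt_10 {V : Type} [Fintype V] (T : SimpleGraph V) (hT : T.IsTree)
    (h : mEternalDomNum T = 2 * domNum T) :
    ∀ D : Set V, IsDomSet T D → D.ncard = domNum T →
      D.Pairwise (fun u v => ¬ T.Adj u v) := by
  intro D hD hmin u hu v hv _ huv
  exact (mEternalDomNum_lt_two_mul_domNum hT.connected hD hmin hu hv huv).ne h
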